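/- Let $\mathbb{Z}$ be a finite set, $P,Q$ probability measures on $\mathbb{Z}$ with full support, $C = \max_z |\log(P(\{z\})/Q(\{z\}))|$, and $n\ge 1$, $\epsilon\in(0,1)$. Then the optimal Type II error $\beta_n(\epsilon) = \min\{Q^n(\mathcal{A}) : P^n(\mathcal{A}^c)\le\epsilon\}$ satisfies $-\frac{1}{n}\log\beta_n(\epsilon) \ge D(P\|Q) - C\sqrt{\frac{2\ln(1/\epsilon)}{n}}$. -/

import Mathlib

open Finset
open scoped Classical

/-!
Test with the log-likelihood ratio: accept `P` on
`B = {z | n (D - δ) ≤ ∑ i, log (P (z i) / Q (z i))}`, where `D = D(P‖Q)`.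
The summands are i.i.d. under `Pⁿ` with mean `D` and values in `[-C, C]`, so Hoeffding's
inequality bounds `Pⁿ(Bᶜ)` by `exp (-n δ² / (2 C²)) = ε`. On `B` the likelihood ratio gives
`Qⁿ ≤ e^{-n (D - δ)} Pⁿ` pointwise, hence `Qⁿ(B) ≤ e^{-n (D - δ)}`. Finally `β_n(ε)` is a minimum
over finitely many tests, each of positive `Qⁿ`-mass, so `β_n(ε) > 0` and we may take logarithms.
-/

open MeasureTheory ProbabilityTheory Real

section PointMasses

variable {Z : Type*} [Fintype Z] [MeasurableSpace Z] [MeasurableSingletonClass Z]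

noncomputable def pointMassMeasure (P : Z → ℝ) : Measure Z :=
  ∑ z, ENNReal.ofReal (P z) • Measure.dirac z

variable {P : Z → ℝ}

lemma pointMassMeasure_singleton (z : Z) :
    pointMassMeasure P {z} = ENNReal.ofReal (P z) := by
  simp [pointMassMeasure, Measure.dirac_apply', Set.indicator, sum_ite_eq']

lemma pointMassMeasure_univ : pointMassMeasure P Set.univ = ∑ z, ENNReal.ofReal (P z) := by
  simp_rw [← coe_univ, ← sum_measure_singleton, pointMassMeasure_singleton]

instance : IsFiniteMeasure (pointMassMeasure P) :=
  ⟨by simp [pointMassMeasure_univ, ENNReal.sum_lt_top]⟩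

lemma isProbabilityMeasure_pointMassMeasure (hP : ∀ z, 0 ≤ P z) (h1 : ∑ z, P z = 1) :
    IsProbabilityMeasure (pointMassMeasure P) := by
  rw [isProbabilityMeasure_iff, pointMassMeasure_univ,
    ← ENNReal.ofReal_sum_of_nonneg fun z _ => hP z, h1, ENNReal.ofReal_one]

lemma integral_pointMassMeasure (hP : ∀ z, 0 ≤ P z) (f : Z → ℝ) :
    ∫ z, f z ∂pointMassMeasure P = ∑ z, P z * f z := by
  simp [integral_fintype (Integrable.of_finite), measureReal_def, pointMassMeasure_singleton, hP]

lemma pi_pointMassMeasure_real {ι : Type*} [Fintype ι] (hP : ∀ z, 0 ≤ P z) (s : Finset (ι → Z)) :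
    (Measure.pi fun _ : ι => pointMassMeasure P).real s = ∑ z ∈ s, ∏ i, P (z i) := by
  rw [← sum_measureReal_singleton]
  refine sum_congr rfl fun z _ => ?_
  simp [measureReal_def, pointMassMeasure_singleton, ENNReal.toReal_prod, hP]

end PointMasses

section Hoeffding

variable {Ω ι : Type*} [MeasurableSpace Ω] {μ : Measure Ω} [IsProbabilityMeasure μ] [Fintype ι]

lemma measureReal_pi_sum_le_card_mul_sub_le {Y : Ω → ℝ} (hY : Measurable Y) {C : ℝ}
    (hC : ∀ ω, |Y ω| ≤ C) {δ : ℝ} (hδ : 0 ≤ δ) :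
    (Measure.pi fun _ : ι => μ).real {ω | ∑ i, Y (ω i) ≤ Fintype.card ι * (μ[Y] - δ)} ≤
      exp (-(Fintype.card ι * δ ^ 2) / (2 * C ^ 2)) := by
  let c : NNReal := (‖C - -C‖₊ / 2) ^ 2
  have hc : (c : ℝ) = C ^ 2 := by
    simp [c, Real.norm_eq_abs, ← two_mul]
  have h_indep : iIndepFun (fun i ω => μ[Y] - Y (ω i)) (Measure.pi fun _ : ι => μ) :=
    iIndepFun_pi (X := fun _ y => μ[Y] - Y y) fun _ => by fun_prop
  have h_subG : ∀ i ∈ (univ : Finset ι),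
      HasSubgaussianMGF (fun ω => μ[Y] - Y (ω i)) c (Measure.pi fun _ : ι => μ) := by
    intro i _
    have hmap := (measurePreserving_eval (fun _ : ι => μ) i).map_eq
    have h := (hasSubgaussianMGF_of_mem_Icc (μ := μ) hY.aemeasurable
      (ae_of_all _ fun ω => abs_le.1 (hC ω))).neg
    rw [← hmap] at h
    exact (h.of_map (measurable_pi_apply i).aemeasurable).congr
      (ae_of_all _ fun ω => by simp [hmap])
  have hset : {ω : ι → Ω | ∑ i, Y (ω i) ≤ Fintype.card ι * (μ[Y] - δ)} =
      {ω | Fintype.card ι * δ ≤ ∑ i, (μ[Y] - Y (ω i))} := by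
    ext ω
    simp only [Set.mem_ofPred_eq, sum_sub_distrib, sum_const, card_univ,
      nsmul_eq_mul]
    constructor <;> intro h <;> linarith
  rw [hset]
  refine (HasSubgaussianMGF.measure_sum_ge_le_of_iIndepFun h_indep h_subG
    (by positivity)).trans_eq ?_
  rw [sum_const, card_univ]
  push_cast [hc, nsmul_eq_mul]
  rcases eq_or_ne (Fintype.card ι : ℝ) 0 with h0 | h0
  · simp [h0]
  · field_simp

end Hoeffding

section Stein

variable {Z ι : Type*} [Fintype Z] [Fintype ι] [DecidableEq ι] {P Q : Z → ℝ}

lemma sum_prod_apply_eq_one (h1 : ∑ z, P z = 1) : ∑ z : ι → Z, ∏ i, P (z i) = 1 := by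
  simp [← Fintype.piFinset_univ, ← prod_univ_sum, h1]

lemma sum_filter_sum_lt_prod_le_exp (hP : ∀ z, 0 ≤ P z) (h1 : ∑ z, P z = 1) {Y : Z → ℝ}
    {C : ℝ} (hC : ∀ z, |Y z| ≤ C) {δ : ℝ} (hδ : 0 ≤ δ) :
    ∑ z ∈ univ.filter (fun z : ι → Z => ∑ i, Y (z i) < Fintype.card ι * (∑ z, P z * Y z - δ)),
      ∏ i, P (z i) ≤ exp (-(Fintype.card ι * δ ^ 2) / (2 * C ^ 2)) := by
  let _ : MeasurableSpace Z := ⊤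
  have := isProbabilityMeasure_pointMassMeasure hP h1
  rw [← pi_pointMassMeasure_real hP, ← integral_pointMassMeasure hP]
  refine le_trans (measureReal_mono fun z hz => ?_)
    (measureReal_pi_sum_le_card_mul_sub_le (measurable_of_finite Y) hC hδ)
  simp only [coe_filter, mem_univ, true_and, Set.mem_ofPred_eq] at hz ⊢
  exact hz.le

lemma sum_filter_le_sum_log_prod_le_exp (hP : ∀ z, 0 < P z) (h1 : ∑ z, P z = 1)
    (hQ : ∀ z, 0 < Q z) (t : ℝ) :
    ∑ z ∈ univ.filter (fun z : ι → Z => t ≤ ∑ i, log (P (z i) / Q (z i))), ∏ i, Q (z i) ≤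
      exp (-t) := by
  have hQ_eq (z : ι → Z) :
      ∏ i, Q (z i) = exp (-∑ i, log (P (z i) / Q (z i))) * ∏ i, P (z i) := by
    have h : exp (∑ i, log (P (z i) / Q (z i))) * ∏ i, Q (z i) = ∏ i, P (z i) := by
      rw [exp_sum, ← prod_mul_distrib]
      refine prod_congr rfl fun i _ => ?_
      rw [exp_log (div_pos (hP _) (hQ _)), div_mul_cancel₀ _ (hQ _).ne']
    rw [← h, ← mul_assoc, ← exp_add, neg_add_cancel, exp_zero, one_mul]
  calc ∑ z ∈ univ.filter (fun z : ι → Z => t ≤ ∑ i, log (P (z i) / Q (z i))), ∏ i, Q (z i)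
      ≤ ∑ z ∈ univ.filter (fun z : ι → Z => t ≤ ∑ i, log (P (z i) / Q (z i))),
          exp (-t) * ∏ i, P (z i) := by
        refine sum_le_sum fun z hz => ?_
        rw [hQ_eq]
        exact mul_le_mul_of_nonneg_right (exp_le_exp.2 (neg_le_neg (mem_filter.1 hz).2))
          (prod_nonneg fun i _ => (hP _).le)
    _ ≤ exp (-t) * ∑ z : ι → Z, ∏ i, P (z i) := by
        rw [← mul_sum]
        gcongr
        · exact fun z _ _ => prod_nonneg fun i _ => (hP _).le
        · exact filter_subset _ _
    _ = exp (-t) := by rw [sum_prod_apply_eq_one h1, mul_one]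

lemma sum_filter_sum_lt_prod_le [Nonempty Z] [Nonempty ι] (hP : ∀ z, 0 ≤ P z)
    (h1 : ∑ z, P z = 1) {Y : Z → ℝ} {C : ℝ} (hC : ∀ z, |Y z| ≤ C) {ε : ℝ} (hε0 : 0 < ε)
    (hε1 : ε ≤ 1) :
    ∑ z ∈ univ.filter (fun z : ι → Z => ∑ i, Y (z i) <
        Fintype.card ι * (∑ z, P z * Y z - C * √(2 * log (1 / ε) / Fintype.card ι))),
      ∏ i, P (z i) ≤ ε := by
  have hC0 : 0 ≤ C := (abs_nonneg _).trans (hC (Classical.arbitrary Z))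
  rcases hC0.eq_or_lt with rfl | hCpos
  -- for `C = 0` Hoeffding's bound reads `exp (-x / 0) = 1`, but then the set is empty
  · have hY (z : Z) : Y z = 0 := abs_nonpos_iff.1 (hC z)
    simp [hY, hε0.le]
  have hL : 0 ≤ log (1 / ε) := log_nonneg (by rw [le_div_iff₀ hε0]; linarith)
  have hcard : (0 : ℝ) < Fintype.card ι := by exact_mod_cast Fintype.card_pos
  refine (sum_filter_sum_lt_prod_le_exp hP h1 hC (by positivity)).trans_eq ?_
  rw [mul_pow, sq_sqrt (by positivity), one_div, log_inv]
  field_simp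
  rw [exp_log hε0]

end Stein

section OptimalTest

variable {Ω : Type*} [Fintype Ω] [DecidableEq Ω] {p q : Ω → ℝ} {ε : ℝ}

def typeIIErrors (p q : Ω → ℝ) (ε : ℝ) : Set ℝ :=
  {r | ∃ A : Finset Ω, ∑ z ∈ Aᶜ, p z ≤ ε ∧ r = ∑ z ∈ A, q z}

lemma sInf_typeIIErrors_le (hq : ∀ z, 0 ≤ q z) {A : Finset Ω} (hA : ∑ z ∈ Aᶜ, p z ≤ ε) :
    sInf (typeIIErrors p q ε) ≤ ∑ z ∈ A, q z :=
  csInf_le ⟨0, by rintro _ ⟨B, -, rfl⟩; exact sum_nonneg fun z _ => hq z⟩ ⟨A, hA, rfl⟩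

lemma sInf_typeIIErrors_pos (hp : ∑ z, p z = 1) (hq : ∀ z, 0 < q z) (hε0 : 0 ≤ ε)
    (hε1 : ε < 1) : 0 < sInf (typeIIErrors p q ε) := by
  have hfin : (typeIIErrors p q ε).Finite :=
    (Set.finite_range fun A : Finset Ω => ∑ z ∈ A, q z).subset
      (by rintro _ ⟨A, -, rfl⟩; exact ⟨A, rfl⟩)
  have hne : (typeIIErrors p q ε).Nonempty := ⟨_, univ, by simpa using hε0, rfl⟩
  obtain ⟨A, hA, hmin⟩ := hne.csInf_mem hfin
  rw [hmin]
  refine sum_pos (fun z _ => hq z) (nonempty_iff_ne_empty.2 fun hA0 => ?_)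
  rw [hA0, compl_empty, hp] at hA
  linarith

end OptimalTest

theorem stmt_10_general {Z : Type*} [Fintype Z] [Nonempty Z]
    (P Q : Z → ℝ) (hPpos : ∀ z, 0 < P z) (hP1 : ∑ z, P z = 1)
    (hQpos : ∀ z, 0 < Q z)
    (C : ℝ)
    (hC : C = Finset.univ.sup' Finset.univ_nonempty (fun z => |Real.log (P z / Q z)|))
    (n : ℕ) (hn : 1 ≤ n) (ε : ℝ) (hε : ε ∈ Set.Ioo (0 : ℝ) 1)
    (β : ℝ)
    (hβ : β = sInf {q : ℝ | ∃ A : Finset (Fin n → Z),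
        (∑ z ∈ Aᶜ, ∏ i, P (z i)) ≤ ε ∧ q = ∑ z ∈ A, ∏ i, Q (z i)}) :
    (∑ z, P z * Real.log (P z / Q z)) - C * Real.sqrt (2 * Real.log (1 / ε) / n) ≤
      -(1 / (n : ℝ)) * Real.log β := by
  obtain ⟨hε0, hε1⟩ := hε
  have : Nonempty (Fin n) := ⟨⟨0, hn⟩⟩
  set D := ∑ z, P z * log (P z / Q z)
  set δ := C * √(2 * log (1 / ε) / n)
  have hXC (z : Z) : |log (P z / Q z)| ≤ C :=
    hC ▸ le_sup' (fun z => |log (P z / Q z)|) (mem_univ z)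
  set A := univ.filter (fun z : Fin n → Z => n * (D - δ) ≤ ∑ i, log (P (z i) / Q (z i)))
  have hI : ∑ z ∈ Aᶜ, ∏ i, P (z i) ≤ ε := by
    have h := sum_filter_sum_lt_prod_le (ι := Fin n) (fun z => (hPpos z).le) hP1 hXC hε0 hε1.le
    rw [Fintype.card_fin] at h
    simpa only [A, compl_filter, not_le] using h
  have hII : ∑ z ∈ A, ∏ i, Q (z i) ≤ exp (-(n * (D - δ))) :=
    sum_filter_le_sum_log_prod_le_exp hPpos hP1 hQpos _
  have hβ' : β = sInf (typeIIErrors (fun z : Fin n → Z => ∏ i, P (z i))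
      (fun z => ∏ i, Q (z i)) ε) := hβ
  have hβpos : 0 < β := by
    rw [hβ']
    exact sInf_typeIIErrors_pos (sum_prod_apply_eq_one hP1)
      (fun z => prod_pos fun i _ => hQpos (z i)) hε0.le hε1
  have hlogβ : log β ≤ -(n * (D - δ)) := by
    rw [← log_exp (-(n * (D - δ)))]
    refine log_le_log hβpos ?_
    rw [hβ']
    exact (sInf_typeIIErrors_le (fun z => prod_nonneg fun i _ => (hQpos (z i)).le) hI).trans hII
  have hn' : (0 : ℝ) < n := by exact_mod_cast hn
  calc D - δ = -(1 / n) * (-(n * (D - δ))) := by field_simp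
    _ ≤ -(1 / n) * log β := mul_le_mul_of_nonpos_left hlogβ (by simp)

theorem stmt_10 {Z : Type*} [Fintype Z] [Nonempty Z]
    (P Q : Z → ℝ) (hPpos : ∀ z, 0 < P z) (hP1 : ∑ z, P z = 1)
    (hQpos : ∀ z, 0 < Q z) (hQ1 : ∑ z, Q z = 1)
    (C : ℝ)
    (hC : C = Finset.univ.sup' Finset.univ_nonempty (fun z => |Real.log (P z / Q z)|))
    (n : ℕ) (hn : 1 ≤ n) (ε : ℝ) (hε : ε ∈ Set.Ioo (0 : ℝ) 1)
    (β : ℝ)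
    (hβ : β = sInf {q : ℝ | ∃ A : Finset (Fin n → Z),
        (∑ z ∈ Aᶜ, ∏ i, P (z i)) ≤ ε ∧ q = ∑ z ∈ A, ∏ i, Q (z i)}) :
    (∑ z, P z * Real.log (P z / Q z)) - C * Real.sqrt (2 * Real.log (1 / ε) / n) ≤
      -(1 / (n : ℝ)) * Real.log β :=
  stmt_10_general P Q hPpos hP1 hQpos C hC n hn ε hε β hβ
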